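/- Let x₁, x₂ ∈ V be linearly independent vectors (so they span distinct points p₁ ≠ p₂ of P³ lying on the line l = span(x₁,x₂)), and let L₁, L₂ ⊆ V be lines with L₁ ∩ L₂ = 0 (skew) such that x₁ ∉ L₁ ∪ L₂ and x₂ ∉ L₁ ∪ L₂. Let Q = {q ∈ S²V* : q(x₁) = q(x₂) = 0 and q vanishes on L₁ and on L₂}. If l ∩ L₁ ≠ 0 and l ∩ L₂ ≠ 0 then dim Q = 3, and otherwise dim Q = 2. -/

import Mathlib

/-!
Since `V = L₁ ⊕ L₂`, a quadratic form vanishing on `L₁` and on `L₂` is `q (u + v) = B u v` for a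
unique bilinear form `B : L₁ × L₂ → k`, so these forms make up a `2 · 2 = 4`-dimensional space.
Writing `xᵢ = uᵢ + vᵢ` (all `uᵢ, vᵢ ≠ 0` as `xᵢ ∉ L₁ ∪ L₂`), the two remaining conditions are
`B u₁ v₁ = 0` and `B u₂ v₂ = 0`; they are independent unless both `u₁ ∥ u₂` and `v₁ ∥ v₂`.
Finally `l` meets `L₁` exactly when `v₁ ∥ v₂` and meets `L₂` exactly when `u₁ ∥ u₂`.
-/

open Module

/-- The subspace of quadratic forms on `V` vanishing on a subset `S ⊆ V`. -/
def vanishingQuadrics (k V : Type) [Field k] [AddCommGroup V] [Module k V]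
    (S : Set V) : Submodule k (QuadraticForm k V) where
  carrier := {q | ∀ x ∈ S, q x = 0}
  zero_mem' := by intro x hx; simp
  add_mem' := by
    intro a b ha hb x hx
    simp [ha x hx, hb x hx]
  smul_mem' := by
    intro c q hq x hx
    simp [hq x hx]

open LinearMap Submodule

section Bilinear

variable {K M N : Type*} [Field K] [AddCommGroup M] [Module K M] [AddCommGroup N] [Module K N]

theorem exists_dual_apply_eq_one_of_notMem {p : Submodule K M} {x : M} (hx : x ∉ p) :
    ∃ f : Dual K M, f x = 1 ∧ ∀ y ∈ p, f y = 0 := by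
  obtain ⟨f, hfx, hfp⟩ := p.exists_dual_map_eq_bot_of_notMem hx inferInstance
  refine ⟨(f x)⁻¹ • f, inv_mul_cancel₀ hfx, fun y hy => ?_⟩
  have hfy : f y ∈ p.map f := mem_map_of_mem hy
  rw [hfp, mem_bot] at hfy
  simp [hfy]

variable (K) in
def bilinEval (u : M) (v : N) : (M →ₗ[K] N →ₗ[K] K) →ₗ[K] K :=
  (applyₗ v).comp (applyₗ u)

@[simp]
theorem bilinEval_apply (u : M) (v : N) (B : M →ₗ[K] N →ₗ[K] K) :
    bilinEval K u v B = B u v :=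
  rfl

theorem LinearIndependent.notMem_span_singleton_of_pair {x y : M}
    (h : LinearIndependent K ![x, y]) : x ∉ K ∙ y := by
  have hcompl : ({0}ᶜ : Set (Fin 2)) = {1} := by ext i; fin_cases i <;> simp
  simpa [hcompl] using h.notMem_span 0

theorem exists_bilin_apply_eq_one_apply_eq_zero {u₁ u₂ : M} {v₁ v₂ : N} (hu : u₁ ≠ 0)
    (hv : v₁ ≠ 0) (h : LinearIndependent K ![u₁, u₂] ∨ LinearIndependent K ![v₁, v₂]) :
    ∃ B : M →ₗ[K] N →ₗ[K] K, B u₁ v₁ = 1 ∧ B u₂ v₂ = 0 := by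
  obtain ⟨p, q, hup, hvq, h₂⟩ : ∃ (p : Submodule K M) (q : Submodule K N),
      u₁ ∉ p ∧ v₁ ∉ q ∧ (u₂ ∈ p ∨ v₂ ∈ q) := by
    rcases h with h | h
    · exact ⟨K ∙ u₂, ⊥, h.notMem_span_singleton_of_pair, by simpa,
        .inl (mem_span_singleton_self u₂)⟩
    · exact ⟨⊥, K ∙ v₂, by simpa, h.notMem_span_singleton_of_pair,
        .inr (mem_span_singleton_self v₂)⟩
  obtain ⟨f, hf₁, hf₂⟩ := exists_dual_apply_eq_one_of_notMem hup
  obtain ⟨g, hg₁, hg₂⟩ := exists_dual_apply_eq_one_of_notMem hvq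
  refine ⟨f.smulRight g, by simp [hf₁, hg₁], ?_⟩
  rcases h₂ with h₂ | h₂
  · simp [hf₂ _ h₂]
  · simp [hg₂ _ h₂]

variable [FiniteDimensional K M] [FiniteDimensional K N]

theorem finrank_ker_bilinEval_prod_of_not_linearIndependent {u₁ u₂ : M} {v₁ v₂ : N}
    (hu : u₁ ≠ 0) (hv : v₁ ≠ 0) (hu₁₂ : ¬LinearIndependent K ![u₁, u₂])
    (hv₁₂ : ¬LinearIndependent K ![v₁, v₂]) :
    finrank K (ker ((bilinEval K u₁ v₁).prod (bilinEval K u₂ v₂))) =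
      finrank K M * finrank K N - 1 := by
  obtain ⟨a, rfl⟩ : ∃ a : K, a • u₁ = u₂ := by
    simpa [LinearIndependent.pair_iff' hu] using hu₁₂
  obtain ⟨b, rfl⟩ : ∃ b : K, b • v₁ = v₂ := by
    simpa [LinearIndependent.pair_iff' hv] using hv₁₂
  have hker : ker ((bilinEval K u₁ v₁).prod (bilinEval K (a • u₁) (b • v₁))) =
      ker (bilinEval K u₁ v₁) := by
    ext B
    simp +contextual
  obtain ⟨f, hf, -⟩ := exists_dual_apply_eq_one_of_notMem (K := K) (p := ⊥) (by simpa using hu)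
  obtain ⟨g, hg, -⟩ := exists_dual_apply_eq_one_of_notMem (K := K) (p := ⊥) (by simpa using hv)
  have hne : bilinEval K u₁ v₁ ≠ 0 := fun h => by
    simpa [hf, hg] using LinearMap.congr_fun h (f.smulRight g)
  have hrank := Dual.finrank_ker_add_one_of_ne_zero (V₁ := M →ₗ[K] N →ₗ[K] K) hne
  rw [finrank_linearMap, finrank_linearMap, finrank_self, mul_one] at hrank
  rw [hker]
  omega

theorem finrank_ker_bilinEval_prod_of_linearIndependent {u₁ u₂ : M} {v₁ v₂ : N}
    (hu₁ : u₁ ≠ 0) (hu₂ : u₂ ≠ 0) (hv₁ : v₁ ≠ 0) (hv₂ : v₂ ≠ 0)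
    (h : LinearIndependent K ![u₁, u₂] ∨ LinearIndependent K ![v₁, v₂]) :
    finrank K (ker ((bilinEval K u₁ v₁).prod (bilinEval K u₂ v₂))) =
      finrank K M * finrank K N - 2 := by
  obtain ⟨B₁, hB₁₁, hB₁₂⟩ := exists_bilin_apply_eq_one_apply_eq_zero hu₁ hv₁ h
  obtain ⟨B₂, hB₂₂, hB₂₁⟩ := exists_bilin_apply_eq_one_apply_eq_zero hu₂ hv₂
    (by rwa [LinearIndependent.pair_symm_iff, LinearIndependent.pair_symm_iff (x := v₁)] at h)
  have hsurj : Function.Surjective ((bilinEval K u₁ v₁).prod (bilinEval K u₂ v₂)) := by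
    rintro ⟨c, d⟩
    exact ⟨c • B₁ + d • B₂, by simp [hB₁₁, hB₁₂, hB₂₁, hB₂₂]⟩
  have hrank := finrank_range_add_finrank_ker (V := M →ₗ[K] N →ₗ[K] K) (V₂ := K × K)
    ((bilinEval K u₁ v₁).prod (bilinEval K u₂ v₂))
  rw [range_eq_top.mpr hsurj, finrank_top, finrank_prod, finrank_self, finrank_linearMap,
    finrank_linearMap, finrank_self, mul_one] at hrank
  omega

end Bilinear

section Quadrics

variable {k V : Type} [Field k] [AddCommGroup V] [Module k V]

theorem mem_vanishingQuadrics {S : Set V} {q : QuadraticForm k V} :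
    q ∈ vanishingQuadrics k V S ↔ ∀ x ∈ S, q x = 0 :=
  Iff.rfl

theorem vanishingQuadrics_union (S T : Set V) :
    vanishingQuadrics k V (S ∪ T) = vanishingQuadrics k V S ⊓ vanishingQuadrics k V T := by
  ext q
  simp only [mem_inf, mem_vanishingQuadrics, Set.mem_union, or_imp, forall_and]

namespace IsCompl

variable {L₁ L₂ : Submodule k V} (hc : IsCompl L₁ L₂)

local notation "π₁" => Submodule.projectionOnto L₁ L₂ hc
local notation "π₂" => Submodule.projectionOnto L₂ L₁ (IsCompl.symm hc)

noncomputable def quadraticFormOfBilin : (L₁ →ₗ[k] L₂ →ₗ[k] k) →ₗ[k] QuadraticForm k V where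
  toFun B := BilinMap.toQuadraticMap (B.compl₁₂ π₁ π₂)
  map_add' B C := by ext; simp
  map_smul' c B := by ext; simp

@[simp]
theorem quadraticFormOfBilin_apply (B : L₁ →ₗ[k] L₂ →ₗ[k] k) (x : V) :
    hc.quadraticFormOfBilin B x = B (π₁ x) (π₂ x) :=
  rfl

theorem quadraticFormOfBilin_injective : Function.Injective hc.quadraticFormOfBilin := by
  intro B C hBC
  ext u v
  simpa using congr($hBC ((u : V) + v))

theorem range_quadraticFormOfBilin :
    range hc.quadraticFormOfBilin = vanishingQuadrics k V (L₁ ∪ L₂) := by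
  apply le_antisymm
  · rintro - ⟨B, rfl⟩ x (hx | hx)
    · simp [projectionOnto_apply_of_mem_right hc.symm hx]
    · simp [projectionOnto_apply_of_mem_right hc hx]
  · intro q hq
    refine ⟨(QuadraticMap.polarBilin q).compl₁₂ L₁.subtype L₂.subtype, ?_⟩
    ext x
    conv_rhs => rw [← projection_add_projection_eq_self hc x]
    have h₁ : q (L₁.projection L₂ hc x) = 0 := hq _ (.inl (projection_apply_mem hc x))
    have h₂ : q (L₂.projection L₁ hc.symm x) = 0 :=
      hq _ (.inr (projection_apply_mem hc.symm x))
    simp [QuadraticMap.polar, h₁, h₂]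

theorem comap_quadraticFormOfBilin_vanishingQuadrics_pair (x₁ x₂ : V) :
    comap hc.quadraticFormOfBilin (vanishingQuadrics k V {x₁, x₂}) =
      ker ((bilinEval k (π₁ x₁) (π₂ x₁)).prod (bilinEval k (π₁ x₂) (π₂ x₂))) := by
  ext B
  simp [mem_vanishingQuadrics]

theorem finrank_vanishingQuadrics_pair_union (x₁ x₂ : V) :
    finrank k (vanishingQuadrics k V ({x₁, x₂} ∪ (L₁ : Set V) ∪ (L₂ : Set V))) =
      finrank k (ker ((bilinEval k (π₁ x₁) (π₂ x₁)).prod (bilinEval k (π₁ x₂) (π₂ x₂)))) := by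
  rw [Set.union_assoc, vanishingQuadrics_union, ← hc.range_quadraticFormOfBilin, inf_comm,
    ← map_comap_eq, comap_quadraticFormOfBilin_vanishingQuadrics_pair]
  exact (equivMapOfInjective _ hc.quadraticFormOfBilin_injective _).finrank_eq.symm

end IsCompl

end Quadrics

theorem span_pair_inf_ker_eq_bot_iff {K V W : Type*} [Field K] [AddCommGroup V] [Module K V]
    [AddCommGroup W] [Module K W] (f : V →ₗ[K] W) {x₁ x₂ : V}
    (hx : LinearIndependent K ![x₁, x₂]) :
    span K {x₁, x₂} ⊓ ker f = ⊥ ↔ LinearIndependent K ![f x₁, f x₂] := by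
  have hrange : Set.range ![x₁, x₂] = {x₁, x₂} := Matrix.range_cons_cons_empty x₁ x₂ _
  have hcomp : f ∘ ![x₁, x₂] = ![f x₁, f x₂] := by ext i; fin_cases i <;> rfl
  rw [← disjoint_iff, ← hcomp, ← hrange]
  exact ⟨fun h => hx.map h, range_ker_disjoint⟩

theorem statement16_general
    (k V : Type) [Field k]
    [AddCommGroup V] [Module k V]
    (hV : finrank k V = 4)
    (x₁ x₂ : V) (hx : LinearIndependent k ![x₁, x₂])
    (L₁ L₂ : Submodule k V)
    (hL₁ : finrank k L₁ = 2) (hL₂ : finrank k L₂ = 2)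
    (hskew : L₁ ⊓ L₂ = ⊥)
    (hx₁L₁ : x₁ ∉ L₁) (hx₁L₂ : x₁ ∉ L₂) (hx₂L₁ : x₂ ∉ L₁) (hx₂L₂ : x₂ ∉ L₂) :
    (Submodule.span k {x₁, x₂} ⊓ L₁ ≠ ⊥ ∧ Submodule.span k {x₁, x₂} ⊓ L₂ ≠ ⊥ →
      finrank k (vanishingQuadrics k V ({x₁, x₂} ∪ (L₁ : Set V) ∪ (L₂ : Set V))) = 3) ∧
    (¬(Submodule.span k {x₁, x₂} ⊓ L₁ ≠ ⊥ ∧ Submodule.span k {x₁, x₂} ⊓ L₂ ≠ ⊥) →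
      finrank k (vanishingQuadrics k V ({x₁, x₂} ∪ (L₁ : Set V) ∪ (L₂ : Set V))) = 2) := by
  have : FiniteDimensional k V := Module.finite_of_finrank_eq_succ hV
  have hc : IsCompl L₁ L₂ :=
    (isCompl_iff_disjoint L₁ L₂ (by rw [hV, hL₁, hL₂])).mpr (disjoint_iff.mpr hskew)
  have hmeet₁ := span_pair_inf_ker_eq_bot_iff (L₂.projectionOnto L₁ hc.symm) hx
  have hmeet₂ := span_pair_inf_ker_eq_bot_iff (L₁.projectionOnto L₂ hc) hx
  rw [ker_projectionOnto] at hmeet₁ hmeet₂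
  have hu₁ : L₁.projectionOnto L₂ hc x₁ ≠ 0 := by simpa using hx₁L₂
  have hu₂ : L₁.projectionOnto L₂ hc x₂ ≠ 0 := by simpa using hx₂L₂
  have hv₁ : L₂.projectionOnto L₁ hc.symm x₁ ≠ 0 := by simpa using hx₁L₁
  have hv₂ : L₂.projectionOnto L₁ hc.symm x₂ ≠ 0 := by simpa using hx₂L₁
  rw [hc.finrank_vanishingQuadrics_pair_union]
  refine ⟨fun ⟨h₁, h₂⟩ => ?_, fun h => ?_⟩
  · rw [finrank_ker_bilinEval_prod_of_not_linearIndependent hu₁ hv₁ (hmeet₂.not.mp h₂)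
      (hmeet₁.not.mp h₁), hL₁, hL₂]
  · rw [finrank_ker_bilinEval_prod_of_linearIndependent hu₁ hu₂ hv₁ hv₂, hL₁, hL₂]
    rw [not_and_or, not_not, not_not] at h
    exact h.symm.imp hmeet₂.mp hmeet₁.mp

/-- Let `x₁, x₂ ∈ V` be linearly independent (giving distinct
points `p₁ ≠ p₂` on the line `l = span(x₁,x₂)` of `P³`), and let `L₁, L₂` be
skew lines with `x₁, x₂ ∉ L₁ ∪ L₂`.  Let `Q` be the space of quadratic forms
vanishing at `x₁, x₂` and on `L₁` and `L₂`.  If `l` meets both `L₁` and `L₂`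
then `dim Q = 3`, and otherwise `dim Q = 2`. -/
theorem statement16
    (k V : Type) [Field k] [IsAlgClosed k] [CharZero k]
    [AddCommGroup V] [Module k V] [FiniteDimensional k V]
    (hV : finrank k V = 4)
    (x₁ x₂ : V) (hx : LinearIndependent k ![x₁, x₂])
    (L₁ L₂ : Submodule k V)
    (hL₁ : finrank k L₁ = 2) (hL₂ : finrank k L₂ = 2)
    (hskew : L₁ ⊓ L₂ = ⊥)
    (hx₁L₁ : x₁ ∉ L₁) (hx₁L₂ : x₁ ∉ L₂) (hx₂L₁ : x₂ ∉ L₁) (hx₂L₂ : x₂ ∉ L₂) :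
    (Submodule.span k {x₁, x₂} ⊓ L₁ ≠ ⊥ ∧ Submodule.span k {x₁, x₂} ⊓ L₂ ≠ ⊥ →
      finrank k (vanishingQuadrics k V ({x₁, x₂} ∪ (L₁ : Set V) ∪ (L₂ : Set V))) = 3) ∧
    (¬(Submodule.span k {x₁, x₂} ⊓ L₁ ≠ ⊥ ∧ Submodule.span k {x₁, x₂} ⊓ L₂ ≠ ⊥) →
      finrank k (vanishingQuadrics k V ({x₁, x₂} ∪ (L₁ : Set V) ∪ (L₂ : Set V))) = 2) :=
  statement16_general k V hV x₁ x₂ hx L₁ L₂ hL₁ hL₂ hskew hx₁L₁ hx₁L₂ hx₂L₁ hx₂L₂
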